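/- Let V be a finite-dimensional vector space over a field and let U₁, …, U_k be subspaces of V, each of dimension n+1 (thought of as cones over projective tangent spaces T_{p_i}X of dimension n). The sum U₁ + ⋯ + U_k is a direct sum (equivalently, dim(U₁ + ⋯ + U_k) = k(n+1)) if and only if for every choice of 2-dimensional subspaces W_i ⊆ U_i (i = 1, …, k), the sum W₁ + ⋯ + W_k is a direct sum of dimension 2k — provided each U_i is spanned by its 2-dimensional subspaces through a fixed line ℓ_i ⊆ U_i (i.e., U_i = sup of all 2-dimensional subspaces of U_i containing ℓ_i). Prove the nontrivial direction: if dim(U₁ + ⋯ + U_k) < k(n+1), then there exist 2-dimensional subspaces W_i ⊆ U_i with ℓ_i ⊆ W_i such that dim(W₁ + ⋯ + W_k) < 2k. -/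

import Mathlib

/-!
A family of subspaces has `dim (⨆ i, U i) < ∑ i, dim U i` exactly when it is not independent,
i.e. when some `v i ∈ U i`, not all zero, sum to `0` (rank–nullity for the summation map
`⨁ i, U i → V`). Take such a relation for the `U i`. Since `U i` is swept out by the planes
through `ℓ i`, each `v i` lies in such a plane `W i`; the same relation shows that the `W i` are
not independent, so `dim (⨆ i, W i) < 2k`.
-/

open Module

theorem iSupIndep_iff_sum_eq_zero_imp_eq_zero {R N ι : Type*} [Ring R] [AddCommGroup N]
    [Module R N] [Fintype ι] (p : ι → Submodule R N) :
    iSupIndep p ↔ ∀ v : ι → N, (∀ i, v i ∈ p i) → ∑ i, v i = 0 → v = 0 := by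
  classical
  rw [iSupIndep_iff_finsetSum_eq_zero_imp_eq_zero]
  refine ⟨fun h v hv hsum => funext fun i => h _ v (fun i _ => hv i) hsum i (Finset.mem_univ i),
    fun h s v hv hsum i hi => ?_⟩
  have hmem : ∀ j, (if j ∈ s then v j else 0) ∈ p j := fun j => by
    split_ifs with hj
    exacts [hv j hj, zero_mem _]
  have := h _ hmem (by rwa [Finset.sum_ite_mem, Finset.univ_inter])
  simpa [hi] using congrFun this i

section

variable {K V ι : Type*} [Field K] [AddCommGroup V] [Module K V] [FiniteDimensional K V]
  [Fintype ι]

theorem Submodule.finrank_iSup_add_finrank_ker_lsum [DecidableEq ι] (p : ι → Submodule K V) :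
    finrank K ↥(⨆ i, p i) + finrank K (LinearMap.ker (DFinsupp.lsum ℕ fun i => (p i).subtype)) =
      ∑ i, finrank K (p i) := by
  rw [Submodule.iSup_eq_range_dfinsupp_lsum, LinearMap.finrank_range_add_finrank_ker]
  exact finrank_directSum K fun i => p i

theorem Submodule.finrank_iSup_lt_sum_iff (p : ι → Submodule K V) :
    finrank K ↥(⨆ i, p i) < ∑ i, finrank K (p i) ↔ ¬ iSupIndep p := by
  classical
  rw [iSupIndep_iff_dfinsupp_lsum_injective, ← LinearMap.ker_eq_bot,
    ← Submodule.finrank_eq_zero, ← finrank_iSup_add_finrank_ker_lsum p]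
  omega

end

theorem stmt1_general (K V : Type*) [Field K] [AddCommGroup V] [Module K V]
    [FiniteDimensional K V] (n k : ℕ)
    (U ℓ : Fin k → Submodule K V)
    (hU : ∀ i, Module.finrank K (U i) = n + 1)
    (hℓ : ∀ i, Module.finrank K (ℓ i) = 1) (hℓU : ∀ i, ℓ i ≤ U i)
    (hswept : ∀ i, ∀ v ∈ U i, v ≠ 0 →
      ∃ W : Submodule K V, ℓ i ≤ W ∧ W ≤ U i ∧ Module.finrank K W = 2 ∧ v ∈ W)
    (hlt : Module.finrank K ↥(⨆ i, U i) < k * (n + 1)) :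
    ∃ W : Fin k → Submodule K V,
      (∀ i, ℓ i ≤ W i ∧ W i ≤ U i ∧ Module.finrank K (W i) = 2) ∧
      Module.finrank K ↥(⨆ i, W i) < 2 * k := by
  have hU_dep : ¬ iSupIndep U := by
    rw [← Submodule.finrank_iSup_lt_sum_iff]
    simpa [hU, mul_comm] using hlt
  obtain ⟨v, hvU, hv_sum, hv_ne⟩ : ∃ v : Fin k → V, (∀ i, v i ∈ U i) ∧ ∑ i, v i = 0 ∧ v ≠ 0 := by
    simpa [iSupIndep_iff_sum_eq_zero_imp_eq_zero] using hU_dep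
  have hplane : ∀ i, ∃ W : Submodule K V,
      ℓ i ≤ W ∧ W ≤ U i ∧ Module.finrank K W = 2 ∧ v i ∈ W := by
    intro i
    by_cases hvi : v i = 0
    · have hℓ_ne : ℓ i ≠ ⊥ := mt Submodule.finrank_eq_zero.mpr (by simp [hℓ i])
      obtain ⟨e, he, he_ne⟩ := Submodule.exists_mem_ne_zero_of_ne_bot hℓ_ne
      obtain ⟨W, hℓW, hWU, hW2, -⟩ := hswept i e (hℓU i he) he_ne
      exact ⟨W, hℓW, hWU, hW2, hvi ▸ W.zero_mem⟩
    · exact hswept i (v i) (hvU i) hvi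
  choose W hℓW hWU hW2 hvW using hplane
  have hW_dep : ¬ iSupIndep W := by
    rw [iSupIndep_iff_sum_eq_zero_imp_eq_zero]
    exact fun h => hv_ne (h v hvW hv_sum)
  refine ⟨W, fun i => ⟨hℓW i, hWU i, hW2 i⟩, ?_⟩
  rw [← Submodule.finrank_iSup_lt_sum_iff] at hW_dep
  simpa [hW2, mul_comm] using hW_dep

/-- Nontrivial direction of the linear-algebra core of Chandler's curvilinear
lemma: if the sum `U₁ + ⋯ + U_k` of the `(n+1)`-dimensional subspaces `U_i`
(each swept out by its `2`-dimensional subspaces through a fixed line `ℓ_i`)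
is not direct, then some choice of `2`-dimensional subspaces `ℓ_i ⊆ W_i ⊆ U_i`
has `dim (W₁ + ⋯ + W_k) < 2k`. -/
theorem stmt1 (K V : Type*) [Field K] [AddCommGroup V] [Module K V]
    [FiniteDimensional K V] (n k : ℕ) (hn : 1 ≤ n) (hk : 1 ≤ k)
    (U ℓ : Fin k → Submodule K V)
    (hU : ∀ i, Module.finrank K (U i) = n + 1)
    (hℓ : ∀ i, Module.finrank K (ℓ i) = 1) (hℓU : ∀ i, ℓ i ≤ U i)
    (hswept : ∀ i, ∀ v ∈ U i, v ≠ 0 →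
      ∃ W : Submodule K V, ℓ i ≤ W ∧ W ≤ U i ∧ Module.finrank K W = 2 ∧ v ∈ W)
    (hlt : Module.finrank K ↥(⨆ i, U i) < k * (n + 1)) :
    ∃ W : Fin k → Submodule K V,
      (∀ i, ℓ i ≤ W i ∧ W i ≤ U i ∧ Module.finrank K (W i) = 2) ∧
      Module.finrank K ↥(⨆ i, W i) < 2 * k :=
  stmt1_general K V n k U ℓ hU hℓ hℓU hswept hlt
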